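/- Let λ > 0 and d > 0. The function y ↦ h_{d,λ}(t;y) := (t−y)_+^d e^{−λ(t−y)_+} − (−y)_+^d e^{−λ(−y)_+} + λ ∫_0^t (s−y)_+^d e^{−λ(s−y)_+} ds belongs to L²(ℝ) for every fixed t ∈ ℝ. -/

import Mathlib

/-!
Write `φ(x) = (x)_+^d e^{-λ (x)_+}`. The first two terms of the kernel are translates of `φ`,
which is in `L²` because `φ²` is a Gamma-type integrand. For `s` between `0` and `t`,
`φ(s - y) ≤ e^{λ |t|} φ(max t 0 - y)`, so the integral term is dominated pointwise by a
multiple of yet another translate of `φ`.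
-/

open Real MeasureTheory

/-- The TFBMII kernel `h_{d,λ}(t;·)`. Here `(x)_+ = max x 0`. -/
noncomputable def hKernel (d lam t : ℝ) (y : ℝ) : ℝ :=
  (max (t - y) 0) ^ d * Real.exp (-lam * max (t - y) 0)
    - (max (-y) 0) ^ d * Real.exp (-lam * max (-y) 0)
    + lam * ∫ s in (0:ℝ)..t, (max (s - y) 0) ^ d * Real.exp (-lam * max (s - y) 0)

open Set

noncomputable def temperedPosPow (d lam x : ℝ) : ℝ :=
  max x 0 ^ d * exp (-lam * max x 0)

section TemperedPosPow

variable {d lam : ℝ}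

lemma temperedPosPow_nonneg (d lam x : ℝ) : 0 ≤ temperedPosPow d lam x :=
  mul_nonneg (rpow_nonneg (le_max_right _ _) d) (exp_pos _).le

lemma continuous_temperedPosPow (hd : 0 ≤ d) (lam : ℝ) : Continuous (temperedPosPow d lam) := by
  unfold temperedPosPow
  have hpow : Continuous fun z : ℝ => z ^ d :=
    continuous_iff_continuousAt.2 fun x => continuousAt_rpow_const x d (Or.inr hd)
  fun_prop

lemma temperedPosPow_sq (d lam x : ℝ) :
    temperedPosPow d lam x ^ 2 = temperedPosPow (2 * d) (2 * lam) x := by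
  unfold temperedPosPow
  rw [mul_pow, ← rpow_mul_natCast (le_max_right _ _), ← exp_nat_mul]
  push_cast
  ring_nf

lemma integrable_temperedPosPow (hd : 0 < d) (hlam : 0 < lam) :
    Integrable (temperedPosPow d lam) := by
  rw [← integrableOn_univ, ← Iic_union_Ioi (a := (0 : ℝ)), integrableOn_union]
  constructor
  · refine (integrableOn_congr_fun (fun x hx => ?_) measurableSet_Iic).2 integrableOn_zero
    simp [temperedPosPow, max_eq_right (mem_Iic.mp hx), zero_rpow hd.ne']
  · refine (integrableOn_congr_fun (fun x hx => ?_) measurableSet_Ioi).2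
      (integrableOn_rpow_mul_exp_neg_mul_rpow (s := d) (by linarith) one_pos hlam)
    simp [temperedPosPow, max_eq_left (mem_Ioi.mp hx).le]

lemma memLp_two_temperedPosPow (hd : 0 < d) (hlam : 0 < lam) :
    MemLp (temperedPosPow d lam) 2 volume := by
  rw [memLp_two_iff_integrable_sq (continuous_temperedPosPow hd.le lam).aestronglyMeasurable]
  simpa only [temperedPosPow_sq] using integrable_temperedPosPow (by positivity) (by positivity)

lemma memLp_two_temperedPosPow_sub (hd : 0 < d) (hlam : 0 < lam) (u : ℝ) :
    MemLp (fun y => temperedPosPow d lam (u - y)) 2 volume :=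
  (memLp_two_temperedPosPow hd hlam).comp_measurePreserving (volume.measurePreserving_sub_left u)

/-- `(x)_+` is `1`-Lipschitz, so the exponential factor shrinks by at most `e^{λ (x' - x)}`. -/
lemma temperedPosPow_le_exp_mul (hd : 0 ≤ d) (hlam : 0 ≤ lam) {x x' : ℝ} (hx : x ≤ x') :
    temperedPosPow d lam x ≤ exp (lam * (x' - x)) * temperedPosPow d lam x' := by
  unfold temperedPosPow
  have hmax : max x 0 ≤ max x' 0 := max_le_max hx le_rfl
  have hgrowth : max x' 0 - max x 0 ≤ x' - x := by
    simpa [abs_of_nonneg (sub_nonneg.2 hx)] using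
      (le_abs_self _).trans (abs_max_sub_max_le_abs x' x 0)
  have hexp : exp (-lam * max x 0) ≤ exp (lam * (x' - x)) * exp (-lam * max x' 0) := by
    rw [← exp_add]
    exact exp_le_exp.2 (by nlinarith)
  calc max x 0 ^ d * exp (-lam * max x 0)
      ≤ max x' 0 ^ d * (exp (lam * (x' - x)) * exp (-lam * max x' 0)) :=
        mul_le_mul (rpow_le_rpow (le_max_right _ _) hmax hd) hexp (exp_pos _).le
          (rpow_nonneg (le_max_right _ _) d)
    _ = exp (lam * (x' - x)) * (max x' 0 ^ d * exp (-lam * max x' 0)) := by ring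

lemma memLp_two_intervalIntegral_temperedPosPow (hd : 0 < d) (hlam : 0 < lam) (a b : ℝ) :
    MemLp (fun y => ∫ s in a..b, temperedPosPow d lam (s - y)) 2 volume := by
  have hcont : Continuous fun y => ∫ s in a..b, temperedPosPow d lam (s - y) :=
    intervalIntegral.continuous_parametric_intervalIntegral_of_continuous'
      (f := fun y s => temperedPosPow d lam (s - y))
      ((continuous_temperedPosPow hd.le lam).comp (continuous_snd.sub continuous_fst)) a b
  refine (memLp_two_temperedPosPow_sub hd hlam (max a b)).of_le_mul hcont.aestronglyMeasurable
    (c := exp (lam * (max a b - min a b)) * |b - a|) (Filter.Eventually.of_forall fun y => ?_)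
  rw [norm_of_nonneg (temperedPosPow_nonneg _ _ _), mul_right_comm]
  refine intervalIntegral.norm_integral_le_of_norm_le_const fun s hs => ?_
  rw [norm_of_nonneg (temperedPosPow_nonneg _ _ _)]
  obtain ⟨hmin, hmax⟩ : s ∈ Icc (min a b) (max a b) := uIoc_subset_uIcc hs
  refine (temperedPosPow_le_exp_mul hd.le hlam.le (x' := max a b - y) (by linarith)).trans ?_
  refine mul_le_mul_of_nonneg_right (exp_le_exp.2 ?_) (temperedPosPow_nonneg _ _ _)
  exact mul_le_mul_of_nonneg_left (by linarith) hlam.le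

end TemperedPosPow

/-- For `λ > 0` and `d > 0`, the kernel `y ↦ h_{d,λ}(t;y)` is square integrable on `ℝ`. -/
theorem stmt5 (d lam : ℝ) (hd : 0 < d) (hlam : 0 < lam) (t : ℝ) :
    MemLp (hKernel d lam t) 2 (volume : Measure ℝ) := by
  have hneg : MemLp (fun y => temperedPosPow d lam (-y)) 2 volume := by
    simpa using memLp_two_temperedPosPow_sub hd hlam 0
  exact ((memLp_two_temperedPosPow_sub hd hlam t).sub hneg).add
    ((memLp_two_intervalIntegral_temperedPosPow hd hlam 0 t).const_mul lam)
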